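/- arXiv:1412.4711 — 3 statements merged into one kernel-verified Lean document; each statement's English description precedes it below -/
import Mathlib

section
/- The polynomial H₁(u,v,w) = u·v²·w² - u²·v·w - u·v²·w - u·v·w² + u²·v + 3·u·v·w - u·v - u·w - v·w + w is irreducible in ℂ[u,v,w]. -/
/-!
As a polynomial in `u` over `ℂ[v, w]`, `H₁ = A u² + B u + C` with `A = v (1 - w)` and
`C = w (1 - v)`. A factorisation of a quadratic over a domain either has a constant factor, which
divides `gcd(A, C) = 1`, or splits into two linear factors, which forces the discriminant
`B² - 4AC` to be a square. It is not: on the diagonal `v = w = x` it becomes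
`x³ (x - 1)³ (x² - x + 4)`, which has a root of odd multiplicity at `x = 0`.
-/

open MvPolynomial

theorem Prime.not_isSquare_pow_mul {α : Type*} [CommMonoidWithZero α] [IsCancelMulZero α]
    {p g : α} (hp : Prime p) (hg : ¬p ∣ g) {n : ℕ} (hn : Odd n) : ¬IsSquare (p ^ n * g) := by
  obtain ⟨k, rfl⟩ := hn
  induction k with
  | zero =>
    rintro ⟨s, hs⟩
    rw [Nat.mul_zero, zero_add, pow_one] at hs
    obtain ⟨t, rfl⟩ : p ∣ s := hp.dvd_of_dvd_pow (n := 2) ⟨g, by rw [sq, ← hs]⟩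
    refine hg ⟨t * t, mul_left_cancel₀ hp.ne_zero ?_⟩
    rw [hs]; ac_rfl
  | succ k ih =>
    rintro ⟨s, hs⟩
    have hpow : p ^ (2 * (k + 1) + 1) * g = p * (p * (p ^ (2 * k + 1) * g)) := by
      rw [show 2 * (k + 1) + 1 = 2 * k + 1 + 1 + 1 by ring, pow_succ, pow_succ]; ac_rfl
    rw [hpow] at hs
    obtain ⟨t, rfl⟩ : p ∣ s := hp.dvd_of_dvd_pow (n := 2) ⟨_, by rw [sq, ← hs]⟩
    refine ih ⟨t, mul_left_cancel₀ hp.ne_zero (mul_left_cancel₀ hp.ne_zero ?_)⟩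
    rw [hs]; ac_rfl

namespace Polynomial

theorem irreducible_C_mul_X_sq_add_C_mul_X_add_C {R : Type*} [CommRing R] [IsDomain R]
    {a b c : R} (hac : IsRelPrime a c) (hdisc : ¬IsSquare (discrim a b c)) :
    Irreducible (C a * X ^ 2 + C b * X + C c) := by
  have ha : a ≠ 0 := by
    rintro rfl
    exact hdisc ⟨b, by rw [discrim]; ring⟩
  set p := C a * X ^ 2 + C b * X + C c
  have hdeg : p.natDegree = 2 := natDegree_quadratic ha
  have isUnit_of_dvd {f : R[X]} (hf : f ∣ p) (hf0 : f.natDegree = 0) : IsUnit f := by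
    rw [eq_C_of_natDegree_eq_zero hf0] at hf ⊢
    have hdvd := (C_dvd_iff_dvd_coeff _ _).mp hf
    exact isUnit_C.mpr (hac (by simpa [p] using hdvd 2) (by simpa [p] using hdvd 0))
  refine ⟨fun hu => by simpa [hdeg] using natDegree_eq_zero_of_isUnit hu, fun f g hfg => ?_⟩
  have hf0 : f ≠ 0 := by rintro rfl; simp [hfg] at hdeg
  have hg0 : g ≠ 0 := by rintro rfl; simp [hfg] at hdeg
  have hsum : f.natDegree + g.natDegree = 2 := by rw [← natDegree_mul hf0 hg0, ← hfg, hdeg]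
  rcases Nat.eq_zero_or_pos f.natDegree with hf | hf
  · exact .inl (isUnit_of_dvd ⟨g, hfg⟩ hf)
  rcases Nat.eq_zero_or_pos g.natDegree with hg | hg
  · exact .inr (isUnit_of_dvd ⟨f, hfg.trans (mul_comm f g)⟩ hg)
  rw [eq_X_add_C_of_natDegree_le_one (show f.natDegree ≤ 1 by omega),
    eq_X_add_C_of_natDegree_le_one (show g.natDegree ≤ 1 by omega)] at hfg
  set f₁ := f.coeff 1; set f₀ := f.coeff 0; set g₁ := g.coeff 1; set g₀ := g.coeff 0
  have hprod : (C f₁ * X + C f₀) * (C g₁ * X + C g₀) =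
      C (f₁ * g₁) * X ^ 2 + C (f₀ * g₁ + f₁ * g₀) * X + C (f₀ * g₀) := by
    simp only [map_mul, map_add]; ring
  rw [hprod] at hfg
  have h2 := congrArg (coeff · 2) hfg
  have h1 := congrArg (coeff · 1) hfg
  have h0 := congrArg (coeff · 0) hfg
  simp only [p, coeff_add, coeff_C_mul, coeff_X_pow, coeff_X, coeff_C] at h2 h1 h0
  norm_num at h2 h1 h0
  exact absurd ⟨f₁ * g₀ - f₀ * g₁, by rw [h2, h1, h0, discrim]; ring⟩ hdisc

end Polynomial

theorem MvPolynomial.irreducible_one_sub_X {σ R : Type*} [CommRing R] [IsDomain R] (i : σ) :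
    Irreducible (1 - X i : MvPolynomial σ R) := by
  simpa [sub_eq_neg_add] using
    irreducible_mul_X_add (-1 : MvPolynomial σ R) 1 i (by simp) (by simp) (by simp)
      isRelPrime_one_right

namespace FigureEight

-- `finSuccEquiv` singles out `u = X 0`; the coefficients live in `ℂ[v, w]`, `v = X 0`, `w = X 1`.
noncomputable def coeffA : MvPolynomial (Fin 2) ℂ := X 0 * (1 - X 1)

noncomputable def coeffB : MvPolynomial (Fin 2) ℂ :=
  X 0 ^ 2 * X 1 ^ 2 - X 0 ^ 2 * X 1 - X 0 * X 1 ^ 2 + 3 * (X 0 * X 1) - X 0 - X 1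

noncomputable def coeffC : MvPolynomial (Fin 2) ℂ := X 1 * (1 - X 0)

theorem finSuccEquiv_H₁ :
    finSuccEquiv ℂ 2
      (X 0 * X 1 ^ 2 * X 2 ^ 2 - X 0 ^ 2 * X 1 * X 2 - X 0 * X 1 ^ 2 * X 2
        - X 0 * X 1 * X 2 ^ 2 + X 0 ^ 2 * X 1 + 3 * (X 0 * X 1 * X 2)
        - X 0 * X 1 - X 0 * X 2 - X 1 * X 2 + X 2) =
      Polynomial.C coeffA * Polynomial.X ^ 2 + Polynomial.C coeffB * Polynomial.X +
        Polynomial.C coeffC := by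
  have h1 : (X 1 : MvPolynomial (Fin 3) ℂ) = X (0 : Fin 2).succ := rfl
  have h2 : (X 2 : MvPolynomial (Fin 3) ℂ) = X (1 : Fin 2).succ := rfl
  simp only [coeffA, coeffB, coeffC, h1, h2, map_add, map_sub, map_mul, map_pow, map_ofNat,
    map_one, finSuccEquiv_X_zero, finSuccEquiv_X_succ]
  ring

theorem isRelPrime_coeffA_coeffC : IsRelPrime coeffA coeffC := by
  have isCoprime_one_sub (p : MvPolynomial (Fin 2) ℂ) : IsCoprime p (1 - p) := ⟨1, 1, by ring⟩
  have hX : IsRelPrime (X 0 : MvPolynomial (Fin 2) ℂ) (X 1) :=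
    X_prime.irreducible.isRelPrime_iff_not_dvd.mpr fun h => by
      simpa using (eval ![0, 1]).map_dvd h
  have hY : IsRelPrime (1 - X 1 : MvPolynomial (Fin 2) ℂ) (1 - X 0) :=
    (irreducible_one_sub_X 1).isRelPrime_iff_not_dvd.mpr fun h => by
      simpa using (eval ![0, 1]).map_dvd h
  exact (hX.mul_right (isCoprime_one_sub _).isRelPrime).mul_left
    ((isCoprime_one_sub _).symm.isRelPrime.mul_right hY)

theorem aeval_X_discrim :
    aeval (fun _ => Polynomial.X) (discrim coeffA coeffB coeffC) =
      (Polynomial.X ^ 3 * ((Polynomial.X - 1) ^ 3 * (Polynomial.X ^ 2 - Polynomial.X + 4)) :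
        Polynomial ℂ) := by
  simp only [discrim, coeffA, coeffB, coeffC, map_sub, map_pow, map_add, map_mul, aeval_X,
    aeval_ofNat, map_one]
  ring

theorem not_isSquare_discrim : ¬IsSquare (discrim coeffA coeffB coeffC) := by
  intro h
  have hX : ¬(Polynomial.X : Polynomial ℂ) ∣
      (Polynomial.X - 1) ^ 3 * (Polynomial.X ^ 2 - Polynomial.X + 4) := by
    rw [Polynomial.X_dvd_iff, Polynomial.coeff_zero_eq_eval_zero]
    norm_num
  exact Polynomial.prime_X.not_isSquare_pow_mul hX (by decide) (aeval_X_discrim ▸ h.map _)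

end FigureEight

theorem stmt_1 :
    Irreducible
      (X 0 * X 1 ^ 2 * X 2 ^ 2 - X 0 ^ 2 * X 1 * X 2 - X 0 * X 1 ^ 2 * X 2
        - X 0 * X 1 * X 2 ^ 2 + X 0 ^ 2 * X 1 + 3 * (X 0 * X 1 * X 2)
        - X 0 * X 1 - X 0 * X 2 - X 1 * X 2 + X 2 :
        MvPolynomial (Fin 3) ℂ) := by
  rw [← MulEquiv.irreducible_iff (finSuccEquiv ℂ 2), FigureEight.finSuccEquiv_H₁]
  exact Polynomial.irreducible_C_mul_X_sq_add_C_mul_X_add_C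
    FigureEight.isRelPrime_coeffA_coeffC FigureEight.not_isSquare_discrim
end

section
/- Let u, v ∈ ℂ with u ≠ 0, v ∉ {0,1}, and u³ ≠ -(v-1)³(v+1)². Define the matrices a = [[0,0,1],[1,0,-u],[0,1,(v-1)²(v+1)/u]] and b = [[1, (-u³(v-2)+(v-1)³(v+1))/(u(v-1)²v), -u(v-2)/(v-1)],[0, v, (v³-v)/u],[0, u/(v-v²), -1]]. Then a·b·b·b·a·b⁻¹·a⁻¹·a⁻¹·b⁻¹ = I, i.e. a and b satisfy the relation of the figure-eight knot group presentation ⟨a,b | ab³aB A²B⟩. -/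
set_option maxHeartbeats 16000000 in
theorem stmt_4 (u v : ℂ) (hu : u ≠ 0) (hv0 : v ≠ 0) (hv1 : v ≠ 1)
    (hd : u ^ 3 ≠ -((v - 1) ^ 3 * (v + 1) ^ 2)) :
    let a : Matrix (Fin 3) (Fin 3) ℂ :=
      !![0, 0, 1; 1, 0, -u; 0, 1, (v - 1) ^ 2 * (v + 1) / u]
    let b : Matrix (Fin 3) (Fin 3) ℂ :=
      !![1, (-(u ^ 3) * (v - 2) + (v - 1) ^ 3 * (v + 1)) / (u * (v - 1) ^ 2 * v),
           -(u * (v - 2)) / (v - 1);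
         0, v, (v ^ 3 - v) / u;
         0, u / (v - v ^ 2), -1]
    a * b * b * b * a * b⁻¹ * a⁻¹ * a⁻¹ * b⁻¹ = 1 := by
  intro a b
  have hv1' : v - 1 ≠ 0 := sub_ne_zero.mpr hv1
  have hvv : v - v ^ 2 ≠ 0 := by
    have h : v - v ^ 2 = -(v * (v - 1)) := by ring
    rw [h]; exact neg_ne_zero.mpr (mul_ne_zero hv0 hv1')
  set A : Matrix (Fin 3) (Fin 3) ℂ :=
    !![0,
       0,
       u;
       u,
       0,
       -1*u^2;
       0,
       u,
       (1 + -1*v + -1*v^2 + v^3)] with hAdef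
  set B : Matrix (Fin 3) (Fin 3) ℂ :=
    !![(u*v + -2*u*v^2 + u*v^3),
       (-1 + 2*v + -2*v^3 + v^4 + 2*u^3 + -1*u^3*v),
       (-2*u^2*v + 3*u^2*v^2 + -1*u^2*v^3);
       0,
       (u*v^2 + -2*u*v^3 + u*v^4),
       (-1*v^2 + 2*v^3 + -2*v^5 + v^6);
       0,
       (u^2 + -1*u^2*v),
       (-1*u*v + 2*u*v^2 + -1*u*v^3)] with hBdef
  set P1 : Matrix (Fin 3) (Fin 3) ℂ :=
    !![0,
       (u^3 + -1*u^3*v),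
       (-1*u^2*v + 2*u^2*v^2 + -1*u^2*v^3);
       (u^2*v + -2*u^2*v^2 + u^2*v^3),
       (-1*u + 2*u*v + -2*u*v^3 + u*v^4 + u^4),
       (-1*u^3*v + u^3*v^2);
       0,
       (u^2 + -2*u^2*v + u^2*v^2),
       (-1*u*v + 2*u*v^2 + -2*u*v^4 + u*v^5)] with hP1def
  set P2 : Matrix (Fin 3) (Fin 3) ℂ :=
    !![0,
       (-1*u^4*v + 4*u^4*v^2 + -6*u^4*v^3 + 4*u^4*v^4 + -1*u^4*v^5),
       (-1*u^3*v^3 + 4*u^3*v^4 + -6*u^3*v^5 + 4*u^3*v^6 + -1*u^3*v^7);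
       (u^3*v^2 + -4*u^3*v^3 + 6*u^3*v^4 + -4*u^3*v^5 + u^3*v^6),
       (-1*u^2*v + 3*u^2*v^2 + -1*u^2*v^3 + -5*u^2*v^4 + 5*u^2*v^5 + u^2*v^6 + -3*u^2*v^7 + u^2*v^8 + u^5*v + -2*u^5*v^2 + u^5*v^3),
       (u*v^2 + -4*u*v^3 + 4*u*v^4 + 4*u*v^5 + -10*u*v^6 + 4*u*v^7 + 4*u*v^8 + -4*u*v^9 + u*v^10 + -2*u^4*v^2 + 6*u^4*v^3 + -6*u^4*v^4 + 2*u^4*v^5);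
       0,
       (-1*u^3*v + 4*u^3*v^2 + -6*u^3*v^3 + 4*u^3*v^4 + -1*u^3*v^5),
       0] with hP2def
  set P3 : Matrix (Fin 3) (Fin 3) ℂ :=
    !![0,
       (-2*u^5*v^3 + 11*u^5*v^4 + -25*u^5*v^5 + 30*u^5*v^6 + -20*u^5*v^7 + 7*u^5*v^8 + -1*u^5*v^9),
       (u^4*v^3 + -5*u^4*v^4 + 8*u^4*v^5 + u^4*v^6 + -20*u^4*v^7 + 29*u^4*v^8 + -20*u^4*v^9 + 7*u^4*v^10 + -1*u^4*v^11);
       (u^4*v^3 + -6*u^4*v^4 + 15*u^4*v^5 + -20*u^4*v^6 + 15*u^4*v^7 + -6*u^4*v^8 + u^4*v^9),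
       (-1*u^3*v^4 + 6*u^3*v^5 + -14*u^3*v^6 + 14*u^3*v^7 + -14*u^3*v^9 + 14*u^3*v^10 + -6*u^3*v^11 + u^3*v^12),
       (u^2*v^4 + -6*u^2*v^5 + 13*u^2*v^6 + -8*u^2*v^7 + -14*u^2*v^8 + 28*u^2*v^9 + -14*u^2*v^10 + -8*u^2*v^11 + 13*u^2*v^12 + -6*u^2*v^13 + u^2*v^14 + -1*u^5*v^3 + 5*u^5*v^4 + -10*u^5*v^5 + 10*u^5*v^6 + -5*u^5*v^7 + u^5*v^8);
       0,
       (-1*u^4*v^3 + 6*u^4*v^4 + -15*u^4*v^5 + 20*u^4*v^6 + -15*u^4*v^7 + 6*u^4*v^8 + -1*u^4*v^9),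
       (u^3*v^3 + -6*u^3*v^4 + 14*u^3*v^5 + -14*u^3*v^6 + 14*u^3*v^8 + -14*u^3*v^9 + 6*u^3*v^10 + -1*u^3*v^11)] with hP3def
  set P4 : Matrix (Fin 3) (Fin 3) ℂ :=
    !![(-2*u^6*v^3 + 11*u^6*v^4 + -25*u^6*v^5 + 30*u^6*v^6 + -20*u^6*v^7 + 7*u^6*v^8 + -1*u^6*v^9),
       (u^5*v^3 + -5*u^5*v^4 + 8*u^5*v^5 + u^5*v^6 + -20*u^5*v^7 + 29*u^5*v^8 + -20*u^5*v^9 + 7*u^5*v^10 + -1*u^5*v^11),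
       (u^4*v^3 + -6*u^4*v^4 + 12*u^4*v^5 + -1*u^4*v^6 + -34*u^4*v^7 + 56*u^4*v^8 + -28*u^4*v^9 + -22*u^4*v^10 + 41*u^4*v^11 + -26*u^4*v^12 + 8*u^4*v^13 + -1*u^4*v^14 + 2*u^7*v^3 + -11*u^7*v^4 + 25*u^7*v^5 + -30*u^7*v^6 + 20*u^7*v^7 + -7*u^7*v^8 + u^7*v^9);
       (-1*u^4*v^4 + 6*u^4*v^5 + -14*u^4*v^6 + 14*u^4*v^7 + -14*u^4*v^9 + 14*u^4*v^10 + -6*u^4*v^11 + u^4*v^12),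
       (u^3*v^4 + -6*u^3*v^5 + 13*u^3*v^6 + -8*u^3*v^7 + -14*u^3*v^8 + 28*u^3*v^9 + -14*u^3*v^10 + -8*u^3*v^11 + 13*u^3*v^12 + -6*u^3*v^13 + u^3*v^14 + -1*u^6*v^3 + 5*u^6*v^4 + -10*u^6*v^5 + 10*u^6*v^6 + -5*u^6*v^7 + u^6*v^8),
       (u^2*v^4 + -7*u^2*v^5 + 18*u^2*v^6 + -14*u^2*v^7 + -25*u^2*v^8 + 63*u^2*v^9 + -36*u^2*v^10 + -36*u^2*v^11 + 63*u^2*v^12 + -25*u^2*v^13 + -14*u^2*v^14 + 18*u^2*v^15 + -7*u^2*v^16 + u^2*v^17 + u^5*v^4 + -5*u^5*v^5 + 8*u^5*v^6 + u^5*v^7 + -20*u^5*v^8 + 29*u^5*v^9 + -20*u^5*v^10 + 7*u^5*v^11 + -1*u^5*v^12);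
       (-1*u^5*v^3 + 6*u^5*v^4 + -15*u^5*v^5 + 20*u^5*v^6 + -15*u^5*v^7 + 6*u^5*v^8 + -1*u^5*v^9),
       (u^4*v^3 + -6*u^4*v^4 + 14*u^4*v^5 + -14*u^4*v^6 + 14*u^4*v^8 + -14*u^4*v^9 + 6*u^4*v^10 + -1*u^4*v^11),
       (u^3*v^3 + -7*u^3*v^4 + 19*u^3*v^5 + -21*u^3*v^6 + -6*u^3*v^7 + 42*u^3*v^8 + -42*u^3*v^9 + 6*u^3*v^10 + 21*u^3*v^11 + -19*u^3*v^12 + 7*u^3*v^13 + -1*u^3*v^14 + u^6*v^3 + -6*u^6*v^4 + 15*u^6*v^5 + -20*u^6*v^6 + 15*u^6*v^7 + -6*u^6*v^8 + u^6*v^9)] with hP4def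
  set Q1 : Matrix (Fin 3) (Fin 3) ℂ :=
    !![(-1*u + 2*u*v + -2*u*v^3 + u*v^4 + 2*u^4 + -1*u^4*v),
       (-2*u^3*v + 3*u^3*v^2 + -1*u^3*v^3),
       (u^2 + -3*u^2*v + 3*u^2*v^2 + u^2*v^3 + -5*u^2*v^4 + 4*u^2*v^5 + -1*u^2*v^6 + -2*u^5 + u^5*v);
       (u^2*v^2 + -2*u^2*v^3 + u^2*v^4),
       (-1*u*v^2 + 2*u*v^3 + -2*u*v^5 + u*v^6),
       (-1*v^2 + 3*v^3 + -1*v^4 + -5*v^5 + 5*v^6 + v^7 + -3*v^8 + v^9 + -1*u^3*v^2 + 2*u^3*v^3 + -1*u^3*v^4);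
       (u^3 + -1*u^3*v),
       (-1*u^2*v + 2*u^2*v^2 + -1*u^2*v^3),
       (-1*u*v + 3*u*v^2 + -2*u*v^3 + -2*u*v^4 + 3*u*v^5 + -1*u*v^6 + -1*u^4 + u^4*v)] with hQ1def
  set Q2 : Matrix (Fin 3) (Fin 3) ℂ :=
    !![(-2*u^4*v + 3*u^4*v^2 + -1*u^4*v^3),
       (u^3 + -3*u^3*v + 3*u^3*v^2 + u^3*v^3 + -5*u^3*v^4 + 4*u^3*v^5 + -1*u^3*v^6 + -2*u^6 + u^6*v),
       (-2*u^2*v + 5*u^2*v^2 + -11*u^2*v^4 + 11*u^2*v^5 + u^2*v^6 + -8*u^2*v^7 + 5*u^2*v^8 + -1*u^2*v^9 + 4*u^5*v + -2*u^5*v^2 + -2*u^5*v^3 + u^5*v^4);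
       (-1*u^2*v^2 + 2*u^2*v^3 + -2*u^2*v^5 + u^2*v^6),
       (-1*u*v^2 + 3*u*v^3 + -1*u*v^4 + -5*u*v^5 + 5*u*v^6 + u*v^7 + -3*u*v^8 + u*v^9 + -1*u^4*v^2 + 2*u^4*v^3 + -1*u^4*v^4),
       (-1*v^2 + 4*v^3 + -3*v^4 + -8*v^5 + 14*v^6 + -14*v^8 + 8*v^9 + 3*v^10 + -4*v^11 + v^12 + u^3*v^2 + -1*u^3*v^3 + -1*u^3*v^4 + 2*u^3*v^6 + -1*u^3*v^7);
       (-1*u^3*v + 2*u^3*v^2 + -1*u^3*v^3),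
       (-1*u^2*v + 3*u^2*v^2 + -2*u^2*v^3 + -2*u^2*v^4 + 3*u^2*v^5 + -1*u^2*v^6 + -1*u^5 + u^5*v),
       (-1*u*v + 4*u*v^2 + -4*u*v^3 + -4*u*v^4 + 10*u*v^5 + -4*u*v^6 + -4*u*v^7 + 4*u*v^8 + -1*u*v^9 + 2*u^4*v + -2*u^4*v^2 + -1*u^4*v^3 + u^4*v^4)] with hQ2def
  set Q3 : Matrix (Fin 3) (Fin 3) ℂ :=
    !![(-2*u^5*v^2 + 7*u^5*v^3 + -9*u^5*v^4 + 5*u^5*v^5 + -1*u^5*v^6),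
       (u^4*v^2 + -3*u^4*v^3 + u^4*v^4 + 6*u^4*v^5 + -9*u^4*v^6 + 5*u^4*v^7 + -1*u^4*v^8),
       (u^3*v^2 + -4*u^3*v^3 + 3*u^3*v^4 + 9*u^3*v^5 + -19*u^3*v^6 + 9*u^3*v^7 + 9*u^3*v^8 + -13*u^3*v^9 + 6*u^3*v^10 + -1*u^3*v^11 + 2*u^6*v^2 + -7*u^6*v^3 + 9*u^6*v^4 + -5*u^6*v^5 + u^6*v^6);
       (-1*u^3*v^3 + 4*u^3*v^4 + -5*u^3*v^5 + 5*u^3*v^7 + -4*u^3*v^8 + u^3*v^9),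
       (u^2*v^3 + -4*u^2*v^4 + 4*u^2*v^5 + 4*u^2*v^6 + -10*u^2*v^7 + 4*u^2*v^8 + 4*u^2*v^9 + -4*u^2*v^10 + u^2*v^11 + -1*u^5*v^2 + 3*u^5*v^3 + -3*u^5*v^4 + u^5*v^5),
       (u*v^3 + -5*u*v^4 + 7*u*v^5 + 5*u*v^6 + -22*u*v^7 + 14*u*v^8 + 14*u*v^9 + -22*u*v^10 + 5*u*v^11 + 7*u*v^12 + -5*u*v^13 + u*v^14 + u^4*v^3 + -3*u^4*v^4 + u^4*v^5 + 6*u^4*v^6 + -9*u^4*v^7 + 5*u^4*v^8 + -1*u^4*v^9);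
       (-1*u^4*v^2 + 4*u^4*v^3 + -6*u^4*v^4 + 4*u^4*v^5 + -1*u^4*v^6),
       (u^3*v^2 + -4*u^3*v^3 + 5*u^3*v^4 + -5*u^3*v^6 + 4*u^3*v^7 + -1*u^3*v^8),
       (u^2*v^2 + -5*u^2*v^3 + 8*u^2*v^4 + -14*u^2*v^6 + 14*u^2*v^7 + -8*u^2*v^9 + 5*u^2*v^10 + -1*u^2*v^11 + u^5*v^2 + -4*u^5*v^3 + 6*u^5*v^4 + -4*u^5*v^5 + u^5*v^6)] with hQ3def
  have hA : u • a = A := by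
    ext i j
    fin_cases i <;> fin_cases j <;>
      · simp [a, hAdef, Matrix.mul_apply, Fin.sum_univ_three, Matrix.smul_apply, Matrix.vecHead,
        Matrix.vecTail, Function.comp, Matrix.cons_val', Matrix.cons_val_zero, Matrix.cons_val_one,
        Matrix.head_cons, Matrix.empty_val', Matrix.cons_val_fin_one, Matrix.head_fin_const,
        Matrix.cons_val_two, Matrix.tail_cons, smul_eq_mul]
        try field_simp
        try ring
  have hB : (u * v * (v - 1) ^ 2) • b = B := by
    ext i j
    fin_cases i <;> fin_cases j <;>
      · simp [b, hBdef, Matrix.mul_apply, Fin.sum_univ_three, Matrix.smul_apply, Matrix.vecHead,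
        Matrix.vecTail, Function.comp, Matrix.cons_val', Matrix.cons_val_zero, Matrix.cons_val_one,
        Matrix.head_cons, Matrix.empty_val', Matrix.cons_val_fin_one, Matrix.head_fin_const,
        Matrix.cons_val_two, Matrix.tail_cons, smul_eq_mul]
        try field_simp
        try ring
  have s1 : A * B = P1 := by
    ext i j
    fin_cases i <;> fin_cases j <;>
      · simp [hAdef, hBdef, hP1def, hP2def, hP3def, hP4def, hQ1def, hQ2def, hQ3def,
          Matrix.mul_apply, Fin.sum_univ_three, Matrix.smul_apply, Matrix.vecHead,
        Matrix.vecTail, Function.comp, Matrix.cons_val', Matrix.cons_val_zero, Matrix.cons_val_one,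
        Matrix.head_cons, Matrix.empty_val', Matrix.cons_val_fin_one, Matrix.head_fin_const,
        Matrix.cons_val_two, Matrix.tail_cons, smul_eq_mul]
        try ring
  have s2 : P1 * B = P2 := by
    ext i j
    fin_cases i <;> fin_cases j <;>
      · simp [hAdef, hBdef, hP1def, hP2def, hP3def, hP4def, hQ1def, hQ2def, hQ3def,
          Matrix.mul_apply, Fin.sum_univ_three, Matrix.smul_apply, Matrix.vecHead,
        Matrix.vecTail, Function.comp, Matrix.cons_val', Matrix.cons_val_zero, Matrix.cons_val_one,
        Matrix.head_cons, Matrix.empty_val', Matrix.cons_val_fin_one, Matrix.head_fin_const,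
        Matrix.cons_val_two, Matrix.tail_cons, smul_eq_mul]
        try ring
  have s3 : P2 * B = P3 := by
    ext i j
    fin_cases i <;> fin_cases j <;>
      · simp [hAdef, hBdef, hP1def, hP2def, hP3def, hP4def, hQ1def, hQ2def, hQ3def,
          Matrix.mul_apply, Fin.sum_univ_three, Matrix.smul_apply, Matrix.vecHead,
        Matrix.vecTail, Function.comp, Matrix.cons_val', Matrix.cons_val_zero, Matrix.cons_val_one,
        Matrix.head_cons, Matrix.empty_val', Matrix.cons_val_fin_one, Matrix.head_fin_const,
        Matrix.cons_val_two, Matrix.tail_cons, smul_eq_mul]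
        try ring
  have s4 : P3 * A = P4 := by
    ext i j
    fin_cases i <;> fin_cases j <;>
      · simp [hAdef, hBdef, hP1def, hP2def, hP3def, hP4def, hQ1def, hQ2def, hQ3def,
          Matrix.mul_apply, Fin.sum_univ_three, Matrix.smul_apply, Matrix.vecHead,
        Matrix.vecTail, Function.comp, Matrix.cons_val', Matrix.cons_val_zero, Matrix.cons_val_one,
        Matrix.head_cons, Matrix.empty_val', Matrix.cons_val_fin_one, Matrix.head_fin_const,
        Matrix.cons_val_two, Matrix.tail_cons, smul_eq_mul]
        try ring
  have t1 : B * A = Q1 := by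
    ext i j
    fin_cases i <;> fin_cases j <;>
      · simp [hAdef, hBdef, hP1def, hP2def, hP3def, hP4def, hQ1def, hQ2def, hQ3def,
          Matrix.mul_apply, Fin.sum_univ_three, Matrix.smul_apply, Matrix.vecHead,
        Matrix.vecTail, Function.comp, Matrix.cons_val', Matrix.cons_val_zero, Matrix.cons_val_one,
        Matrix.head_cons, Matrix.empty_val', Matrix.cons_val_fin_one, Matrix.head_fin_const,
        Matrix.cons_val_two, Matrix.tail_cons, smul_eq_mul]
        try ring
  have t2 : Q1 * A = Q2 := by
    ext i j
    fin_cases i <;> fin_cases j <;>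
      · simp [hAdef, hBdef, hP1def, hP2def, hP3def, hP4def, hQ1def, hQ2def, hQ3def,
          Matrix.mul_apply, Fin.sum_univ_three, Matrix.smul_apply, Matrix.vecHead,
        Matrix.vecTail, Function.comp, Matrix.cons_val', Matrix.cons_val_zero, Matrix.cons_val_one,
        Matrix.head_cons, Matrix.empty_val', Matrix.cons_val_fin_one, Matrix.head_fin_const,
        Matrix.cons_val_two, Matrix.tail_cons, smul_eq_mul]
        try ring
  have t3 : Q2 * B = Q3 := by
    ext i j
    fin_cases i <;> fin_cases j <;>
      · simp [hAdef, hBdef, hP1def, hP2def, hP3def, hP4def, hQ1def, hQ2def, hQ3def,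
          Matrix.mul_apply, Fin.sum_univ_three, Matrix.smul_apply, Matrix.vecHead,
        Matrix.vecTail, Function.comp, Matrix.cons_val', Matrix.cons_val_zero, Matrix.cons_val_one,
        Matrix.head_cons, Matrix.empty_val', Matrix.cons_val_fin_one, Matrix.head_fin_const,
        Matrix.cons_val_two, Matrix.tail_cons, smul_eq_mul]
        try ring
  have e3p : P4 = (u * v * (v - 1) ^ 2) • Q3 := by
    ext i j
    fin_cases i <;> fin_cases j <;>
      · simp [hAdef, hBdef, hP1def, hP2def, hP3def, hP4def, hQ1def, hQ2def, hQ3def,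
          Matrix.mul_apply, Fin.sum_univ_three, Matrix.smul_apply, Matrix.vecHead,
        Matrix.vecTail, Function.comp, Matrix.cons_val', Matrix.cons_val_zero, Matrix.cons_val_one,
        Matrix.head_cons, Matrix.empty_val', Matrix.cons_val_fin_one, Matrix.head_fin_const,
        Matrix.cons_val_two, Matrix.tail_cons, smul_eq_mul]
        try ring
  have hsne : u * v * (v - 1) ^ 2 ≠ 0 :=
    mul_ne_zero (mul_ne_zero hu hv0) (pow_ne_zero _ hv1')
  have hc0 : (u * (u * v * (v - 1) ^ 2) * (u * v * (v - 1) ^ 2) * (u * v * (v - 1) ^ 2) * u) ≠ 0 :=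
    mul_ne_zero (mul_ne_zero (mul_ne_zero (mul_ne_zero hu hsne) hsne) hsne) hu
  have e1 : (u * (u * v * (v - 1) ^ 2) * (u * v * (v - 1) ^ 2) * (u * v * (v - 1) ^ 2) * u) •
      (a * b * b * b * a) = A * B * B * B * A := by
    rw [← hA, ← hB]
    simp only [smul_mul_assoc, mul_smul_comm, smul_smul]
    congr 1
    ring
  have e2 : (u * (u * v * (v - 1) ^ 2) * (u * v * (v - 1) ^ 2) * (u * v * (v - 1) ^ 2) * u) •
      (b * a * a * b) = (u * v * (v - 1) ^ 2) • (B * A * A * B) := by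
    rw [← hA, ← hB]
    simp only [smul_mul_assoc, mul_smul_comm, smul_smul]
    congr 1
    ring
  have key : a * b * b * b * a = b * a * a * b := by
    apply smul_right_injective (Matrix (Fin 3) (Fin 3) ℂ) hc0
    show _ • _ = _ • _
    rw [e1, e2, s1, s2, s3, s4, t1, t2, t3, e3p]
  have hda : IsUnit a.det := by
    have h : a.det = 1 := by
      simp [a, Matrix.det_fin_three, Matrix.vecHead, Matrix.vecTail, Function.comp]
    rw [h]; exact isUnit_one
  have hdb : IsUnit b.det := by
    have h : b.det = 1 := by
      simp [b, Matrix.det_fin_three, Matrix.vecHead, Matrix.vecTail, Function.comp]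
      field_simp
      ring
    rw [h]; exact isUnit_one
  have haa : a * a⁻¹ = 1 := Matrix.mul_nonsing_inv a hda
  have hbb : b * b⁻¹ = 1 := Matrix.mul_nonsing_inv b hdb
  have key2 : a * b * b * b * a * b⁻¹ = b * a * a := by
    rw [key, mul_assoc, hbb, mul_one]
  rw [key2, mul_assoc (b * a) a a⁻¹, haa, mul_one, mul_assoc b a a⁻¹, haa, mul_one, hbb]
end

section
/- Let x,y ∈ ℂ \ {0,1} satisfy x²y² = (1-x)(1-y), and set L = xy/(x-1), M = (1-y)²/y⁴. If L = 1 and M = 1 (boundary unipotent condition), then x² - x + 1 = 0 and y² - y + 1 = 0; in particular (x,y) = (ω,ω) or (x,y) = (ω̄,ω̄) with ω = (1+i√3)/2. -/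
theorem stmt_9 (x y : ℂ) (hx0 : x ≠ 0) (hx1 : x ≠ 1) (hy0 : y ≠ 0) (hy1 : y ≠ 1)
    (h : x ^ 2 * y ^ 2 = (1 - x) * (1 - y))
    (hL : x * y / (x - 1) = 1) (hM : (1 - y) ^ 2 / y ^ 4 = 1) :
    (x ^ 2 - x + 1 = 0 ∧ y ^ 2 - y + 1 = 0) ∧
      ((x, y) = ((1 + Complex.I * Real.sqrt 3) / 2, (1 + Complex.I * Real.sqrt 3) / 2) ∨
        (x, y) = ((1 - Complex.I * Real.sqrt 3) / 2, (1 - Complex.I * Real.sqrt 3) / 2)) := by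
  have hx1' : x - 1 ≠ 0 := sub_ne_zero.mpr hx1
  rw [div_eq_one_iff_eq hx1'] at hL
  have hxy : x = y := by
    have hz : (x - 1) * (x - y) = 0 := by
      linear_combination h - (x * y + x - 1) * hL
    rcases mul_eq_zero.mp hz with h' | h'
    · exact absurd h' hx1'
    · exact sub_eq_zero.mp h'
  subst hxy
  have hx2 : x ^ 2 - x + 1 = 0 := by linear_combination hL
  have s3 : (Real.sqrt 3 : ℂ) ^ 2 = 3 := by
    have : (Real.sqrt 3 : ℝ) ^ 2 = 3 := Real.sq_sqrt (by norm_num)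
    exact_mod_cast this
  have hI : Complex.I ^ 2 = -1 := Complex.I_sq
  have hfac : (x - (1 + Complex.I * Real.sqrt 3) / 2) *
      (x - (1 - Complex.I * Real.sqrt 3) / 2) = 0 := by
    linear_combination hx2 - (3 / 4 : ℂ) * hI - (Complex.I ^ 2 / 4) * s3
  refine ⟨⟨hx2, hx2⟩, ?_⟩
  rcases mul_eq_zero.mp hfac with h' | h'
  · left; rw [sub_eq_zero.mp h']
  · right; rw [sub_eq_zero.mp h']
end
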